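/- Let |𝒳| be the maximum alphabet cardinality of X_1,…,X_n and let 1 ≤ m ≤ n−1. If Ω(X^n) ≤ 0, then for every subset γ ⊆ {1,…,n} with |γ| = m one has C(X^γ) ≤ Ω(X^n) + (n−2) log|𝒳|. -/
import Mathlib


open Finset

noncomputable section

variable {Ω : Type*} [Fintype Ω]

/-- Probability of the event `A ⊆ Ω` under the probability mass function `p`. -/
def probOf (p : Ω → ℝ) (A : Finset Ω) : ℝ := ∑ ω ∈ A, p ω

/-- Shannon entropy (in bits, i.e. logarithm base 2) of the discrete random
variable `X` defined on the finite probability space with mass function `p`. -/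
def shEnt {S : Type*} [Fintype S] [DecidableEq S] (p : Ω → ℝ) (X : Ω → S) : ℝ :=
  -∑ s : S, probOf p (univ.filter fun ω => X ω = s) *
      Real.logb 2 (probOf p (univ.filter fun ω => X ω = s))

/-- Mutual information `I(X;Y)`. -/
def mutInfo {S T : Type*} [Fintype S] [DecidableEq S] [Fintype T] [DecidableEq T]
    (p : Ω → ℝ) (X : Ω → S) (Y : Ω → T) : ℝ :=
  shEnt p X + shEnt p Y - shEnt p (fun ω => (X ω, Y ω))

/-- Conditional mutual information `I(X;Y∣Z)`. -/
def condMutInfo {S T U : Type*} [Fintype S] [DecidableEq S] [Fintype T] [DecidableEq T]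
    [Fintype U] [DecidableEq U] (p : Ω → ℝ) (X : Ω → S) (Y : Ω → T) (Z : Ω → U) : ℝ :=
  shEnt p (fun ω => (X ω, Z ω)) + shEnt p (fun ω => (Y ω, Z ω))
    - shEnt p (fun ω => (X ω, Y ω, Z ω)) - shEnt p Z

variable {n : ℕ} {S : Fin n → Type*} [∀ i, Fintype (S i)] [∀ i, DecidableEq (S i)]

/-- The sub-vector `X^γ` of the tuple of random variables `X`. -/
def restrict (X : ∀ i, Ω → S i) (γ : Finset (Fin n)) : Ω → ∀ i : γ, S i.1 :=
  fun ω i => X i.1 ω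

/-- Joint Shannon entropy `H(X^γ)` of the sub-vector indexed by `γ`. -/
def subEnt (p : Ω → ℝ) (X : ∀ i, Ω → S i) (γ : Finset (Fin n)) : ℝ :=
  shEnt p (restrict X γ)

/-- Total correlation `C(X^γ)`: sum of marginal entropies minus joint entropy. -/
def totCorr (p : Ω → ℝ) (X : ∀ i, Ω → S i) (γ : Finset (Fin n)) : ℝ :=
  (∑ i ∈ γ, shEnt p (X i)) - subEnt p X γ

/-- Binding entropy `B(X^γ)`: joint entropy minus the sum of the residual
entropies `R_j = H(X_j ∣ X^γ_{-j})` (each conditional entropy being a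
difference of joint entropies). -/
def bindEnt (p : Ω → ℝ) (X : ∀ i, Ω → S i) (γ : Finset (Fin n)) : ℝ :=
  subEnt p X γ - ∑ i ∈ γ, (subEnt p X γ - subEnt p X (γ.erase i))

/-- The O-information `Ω(X^γ) = C(X^γ) - B(X^γ)`. -/
def oInfo (p : Ω → ℝ) (X : ∀ i, Ω → S i) (γ : Finset (Fin n)) : ℝ :=
  totCorr p X γ - bindEnt p X γ

/-! ### Auxiliary probability lemmas -/

lemma probOf_nonneg (p : Ω → ℝ) (hp : ∀ ω, 0 ≤ p ω) (A : Finset Ω) : 0 ≤ probOf p A :=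
  Finset.sum_nonneg fun ω _ => hp ω

lemma probOf_mono (p : Ω → ℝ) (hp : ∀ ω, 0 ≤ p ω) {A B : Finset Ω} (h : A ⊆ B) :
    probOf p A ≤ probOf p B :=
  Finset.sum_le_sum_of_subset_of_nonneg h fun ω _ _ => hp ω

lemma sum_probOf {T : Type*} [Fintype T] [DecidableEq T] (p : Ω → ℝ) (Y : Ω → T) :
    ∑ s : T, probOf p (univ.filter fun ω => Y ω = s) = ∑ ω, p ω := by
  simpa [probOf] using Finset.sum_fiberwise (univ : Finset Ω) Y p

/-- Gibbs' inequality. -/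
lemma gibbs {ι : Type*} [Fintype ι] (a b : ι → ℝ) (ha : ∀ i, 0 ≤ a i) (hb : ∀ i, 0 ≤ b i)
    (hab : ∀ i, a i ≠ 0 → b i ≠ 0) (h1 : ∑ i, a i = 1) (h2 : ∑ i, b i ≤ 1) :
    -∑ i, a i * Real.logb 2 (a i) ≤ -∑ i, a i * Real.logb 2 (b i) := by
  have hlog2 : (0:ℝ) < Real.log 2 := Real.log_pos one_lt_two
  have key : ∀ i, a i * Real.logb 2 (b i) - a i * Real.logb 2 (a i)
      ≤ (b i - a i) / Real.log 2 := by
    intro i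
    rcases eq_or_lt_of_le (ha i) with h0 | h0
    · rw [← h0]
      simp only [zero_mul, sub_zero, zero_sub, neg_zero, sub_zero]
      exact div_nonneg (hb i) (le_of_lt hlog2)
    · have hbi : 0 < b i := lt_of_le_of_ne (hb i) (Ne.symm (hab i (ne_of_gt h0)))
      have hlog : Real.log (b i / a i) ≤ b i / a i - 1 :=
        Real.log_le_sub_one_of_pos (by positivity)
      have hlogb : Real.logb 2 (b i) - Real.logb 2 (a i)
          = Real.log (b i / a i) / Real.log 2 := by
        rw [Real.logb, Real.logb, div_sub_div_same, ← Real.log_div (ne_of_gt hbi) (ne_of_gt h0)]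
      have heq : a i * Real.logb 2 (b i) - a i * Real.logb 2 (a i)
          = a i * (Real.log (b i / a i) / Real.log 2) := by rw [← mul_sub, hlogb]
      rw [heq]
      have h4 : a i * (Real.log (b i / a i) / Real.log 2)
          ≤ a i * ((b i / a i - 1) / Real.log 2) := by
        apply mul_le_mul_of_nonneg_left _ (le_of_lt h0)
        exact (div_le_div_iff_of_pos_right hlog2).mpr hlog
      refine h4.trans (le_of_eq ?_)
      field_simp
  have hsum := Finset.sum_le_sum (fun i (_ : i ∈ (univ : Finset ι)) => key i)
  rw [Finset.sum_sub_distrib] at hsum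
  have heq2 : ∑ i, (b i - a i) / Real.log 2 = (∑ i, b i - 1) / Real.log 2 := by
    rw [← Finset.sum_div, Finset.sum_sub_distrib, h1]
  rw [heq2] at hsum
  have hfin : (∑ i, b i - 1) / Real.log 2 ≤ 0 :=
    div_nonpos_iff.mpr (Or.inr ⟨by linarith, le_of_lt hlog2⟩)
  linarith

/-- Data-processing: entropy of a function of `Y` is at most the entropy of `Y`. -/
lemma shEnt_comp_le {T U : Type*} [Fintype T] [DecidableEq T] [Fintype U] [DecidableEq U]
    (p : Ω → ℝ) (hp : ∀ ω, 0 ≤ p ω) (Y : Ω → T) (f : T → U) :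
    shEnt p (fun ω => f (Y ω)) ≤ shEnt p Y := by
  classical
  let a : T → ℝ := fun s => probOf p (univ.filter fun ω => Y ω = s)
  let b : U → ℝ := fun u => probOf p (univ.filter fun ω => f (Y ω) = u)
  have hfib : ∀ u, b u = ∑ s : T, if f s = u then a s else 0 := by
    intro u
    have hsf := Finset.sum_fiberwise ((univ : Finset Ω).filter fun ω => f (Y ω) = u) Y p
    show probOf p (univ.filter fun ω => f (Y ω) = u) = _
    rw [probOf, ← hsf]
    apply Finset.sum_congr rfl
    intro s _
    rw [Finset.filter_filter]
    by_cases hs : f s = u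
    · rw [if_pos hs]
      show _ = probOf p (univ.filter fun ω => Y ω = s)
      rw [probOf]
      congr 1
      apply Finset.filter_congr
      intro ω _
      constructor
      · exact fun h => h.2
      · exact fun h => ⟨by rw [h, hs], h⟩
    · rw [if_neg hs]
      apply Finset.sum_eq_zero
      intro ω hω
      rw [Finset.mem_filter] at hω
      exact absurd (hω.2.2 ▸ hω.2.1) hs
  have hstep : shEnt p (fun ω => f (Y ω)) = -∑ s : T, a s * Real.logb 2 (b (f s)) := by
    show -∑ u : U, b u * Real.logb 2 (b u) = _
    have hterm : ∀ u : U, b u * Real.logb 2 (b u)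
        = ∑ s : T, if f s = u then a s * Real.logb 2 (b u) else 0 := by
      intro u
      rw [hfib u, Finset.sum_mul]
      apply Finset.sum_congr rfl
      intro s _
      by_cases hs : f s = u <;> simp [hs]
    rw [neg_inj.mpr (Finset.sum_congr rfl fun u _ => hterm u), Finset.sum_comm]
    congr 1
    apply Finset.sum_congr rfl
    intro s _
    rw [Finset.sum_ite_eq univ (f s) (fun u => a s * Real.logb 2 (b u))]
    simp
  have hgoal : shEnt p Y = -∑ s : T, a s * Real.logb 2 (a s) := rfl
  rw [hstep, hgoal]
  apply neg_le_neg
  apply Finset.sum_le_sum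
  intro s _
  have has : 0 ≤ a s := probOf_nonneg p hp _
  rcases eq_or_lt_of_le has with h0 | h0
  · rw [← h0]; simp
  · have hle : a s ≤ b (f s) := by
      apply probOf_mono p hp
      intro ω hω
      rw [Finset.mem_filter] at *
      exact ⟨hω.1, by rw [hω.2]⟩
    exact mul_le_mul_of_nonneg_left (Real.logb_le_logb_of_le one_lt_two h0 hle) (le_of_lt h0)

/-- Entropy only depends on the induced partition. -/
lemma shEnt_eq_of_comp {T U : Type*} [Fintype T] [DecidableEq T] [Fintype U] [DecidableEq U]
    (p : Ω → ℝ) (hp : ∀ ω, 0 ≤ p ω) (Y : Ω → T) (Z : Ω → U) (f : T → U) (g : U → T)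
    (hf : ∀ ω, f (Y ω) = Z ω) (hg : ∀ ω, g (Z ω) = Y ω) : shEnt p Y = shEnt p Z := by
  apply le_antisymm
  · have := shEnt_comp_le p hp Z g
    rwa [show (fun ω => g (Z ω)) = Y from funext hg] at this
  · have := shEnt_comp_le p hp Y f
    rwa [show (fun ω => f (Y ω)) = Z from funext hf] at this

/-- Marginalization for pairs. -/
lemma marg_fst {T U : Type*} [Fintype T] [DecidableEq T] [Fintype U] [DecidableEq U]
    (p : Ω → ℝ) (Y : Ω → T) (Z : Ω → U) (s : T) :
    ∑ t : U, probOf p (univ.filter fun ω => (Y ω, Z ω) = (s, t))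
      = probOf p (univ.filter fun ω => Y ω = s) := by
  have hsf := Finset.sum_fiberwise ((univ : Finset Ω).filter fun ω => Y ω = s) Z p
  rw [probOf, ← hsf]
  apply Finset.sum_congr rfl
  intro t _
  rw [probOf, Finset.filter_filter]
  apply Finset.sum_congr _ (fun _ _ => rfl)
  apply Finset.filter_congr
  intro ω _
  simp [Prod.ext_iff, and_comm]

lemma marg_snd {T U : Type*} [Fintype T] [DecidableEq T] [Fintype U] [DecidableEq U]
    (p : Ω → ℝ) (Y : Ω → T) (Z : Ω → U) (t : U) :
    ∑ s : T, probOf p (univ.filter fun ω => (Y ω, Z ω) = (s, t))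
      = probOf p (univ.filter fun ω => Z ω = t) := by
  have hsf := Finset.sum_fiberwise ((univ : Finset Ω).filter fun ω => Z ω = t) Y p
  rw [probOf, ← hsf]
  apply Finset.sum_congr rfl
  intro s _
  rw [probOf, Finset.filter_filter]
  apply Finset.sum_congr _ (fun _ _ => rfl)
  apply Finset.filter_congr
  intro ω _
  simp [Prod.ext_iff, and_comm]

/-- Subadditivity for a pair. -/
lemma shEnt_pair_le {T U : Type*} [Fintype T] [DecidableEq T] [Fintype U] [DecidableEq U]
    (p : Ω → ℝ) (hp : ∀ ω, 0 ≤ p ω) (hp1 : ∑ ω, p ω = 1) (Y : Ω → T) (Z : Ω → U) :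
    shEnt p (fun ω => (Y ω, Z ω)) ≤ shEnt p Y + shEnt p Z := by
  classical
  let a : T × U → ℝ := fun st => probOf p (univ.filter fun ω => (Y ω, Z ω) = st)
  let ay : T → ℝ := fun s => probOf p (univ.filter fun ω => Y ω = s)
  let az : U → ℝ := fun t => probOf p (univ.filter fun ω => Z ω = t)
  have ha : ∀ st, 0 ≤ a st := fun st => probOf_nonneg p hp _
  have hay : ∀ s, 0 ≤ ay s := fun s => probOf_nonneg p hp _
  have haz : ∀ t, 0 ≤ az t := fun t => probOf_nonneg p hp _
  have haley : ∀ st : T × U, a st ≤ ay st.1 := by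
    intro st
    apply probOf_mono p hp
    intro ω hω
    rw [Finset.mem_filter] at *
    exact ⟨hω.1, by rw [← hω.2]⟩
  have halez : ∀ st : T × U, a st ≤ az st.2 := by
    intro st
    apply probOf_mono p hp
    intro ω hω
    rw [Finset.mem_filter] at *
    exact ⟨hω.1, by rw [← hω.2]⟩
  have hsa : ∑ st : T × U, a st = 1 := by
    rw [sum_probOf p (fun ω => (Y ω, Z ω)), hp1]
  have hsay : ∑ s : T, ay s = 1 := by rw [sum_probOf p Y, hp1]
  have hsaz : ∑ t : U, az t = 1 := by rw [sum_probOf p Z, hp1]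
  have hgibbs := gibbs a (fun st => ay st.1 * az st.2) ha
    (fun st => mul_nonneg (hay _) (haz _))
    (by
      intro st hst
      have h1 : 0 < a st := lt_of_le_of_ne (ha st) (Ne.symm hst)
      have h2 : 0 < ay st.1 := lt_of_lt_of_le h1 (haley st)
      have h3 : 0 < az st.2 := lt_of_lt_of_le h1 (halez st)
      positivity)
    hsa
    (by
      rw [Fintype.sum_prod_type]
      simp_rw [← Finset.mul_sum]
      rw [← Finset.sum_mul, hsay, hsaz]
      norm_num)
  have hEpair : shEnt p (fun ω => (Y ω, Z ω)) = -∑ st : T × U, a st * Real.logb 2 (a st) := rfl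
  have hsplit : -∑ st : T × U, a st * Real.logb 2 (ay st.1 * az st.2)
      = shEnt p Y + shEnt p Z := by
    have hterm : ∀ st : T × U, a st * Real.logb 2 (ay st.1 * az st.2)
        = a st * Real.logb 2 (ay st.1) + a st * Real.logb 2 (az st.2) := by
      intro st
      rcases eq_or_lt_of_le (ha st) with h0 | h0
      · rw [← h0]; ring
      · have h2 : 0 < ay st.1 := lt_of_lt_of_le h0 (haley st)
        have h3 : 0 < az st.2 := lt_of_lt_of_le h0 (halez st)
        rw [Real.logb_mul (ne_of_gt h2) (ne_of_gt h3)]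
        ring
    rw [Finset.sum_congr rfl (fun st _ => hterm st), Finset.sum_add_distrib, neg_add]
    congr 1
    · show -∑ st : T × U, a st * Real.logb 2 (ay st.1)
          = -∑ s : T, ay s * Real.logb 2 (ay s)
      rw [Fintype.sum_prod_type]
      congr 1
      apply Finset.sum_congr rfl
      intro s _
      dsimp only
      rw [← Finset.sum_mul]
      congr 1
      exact marg_fst p Y Z s
    · show -∑ st : T × U, a st * Real.logb 2 (az st.2)
          = -∑ t : U, az t * Real.logb 2 (az t)
      rw [Fintype.sum_prod_type_right]
      congr 1
      apply Finset.sum_congr rfl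
      intro t _
      dsimp only
      rw [← Finset.sum_mul]
      congr 1
      exact marg_snd p Y Z t
  rw [hEpair, ← hsplit]
  exact hgibbs

/-- Entropy is at most the log of the alphabet size. -/
lemma shEnt_le_logb_card {T : Type*} [Fintype T] [DecidableEq T]
    (p : Ω → ℝ) (hp : ∀ ω, 0 ≤ p ω) (hp1 : ∑ ω, p ω = 1) (Y : Ω → T) :
    shEnt p Y ≤ Real.logb 2 (Fintype.card T) := by
  classical
  have hΩne : Nonempty Ω := by
    by_contra h
    rw [not_nonempty_iff] at h
    rw [Finset.univ_eq_empty, Finset.sum_empty] at hp1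
    norm_num at hp1
  have hT : 0 < Fintype.card T := Fintype.card_pos_iff.mpr ⟨Y (Classical.arbitrary Ω)⟩
  have hTd : (0:ℝ) < (Fintype.card T : ℝ) := by exact_mod_cast hT
  have hgibbs := gibbs (fun s => probOf p (univ.filter fun ω => Y ω = s))
    (fun _ => (Fintype.card T : ℝ)⁻¹)
    (fun s => probOf_nonneg p hp _)
    (fun _ => by positivity)
    (fun _ _ => by positivity)
    (by rw [sum_probOf p Y, hp1])
    (by
      rw [Finset.sum_const, Finset.card_univ, nsmul_eq_mul]
      rw [mul_inv_cancel₀ (ne_of_gt hTd)])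
  refine le_trans hgibbs (le_of_eq ?_)
  have : ∀ s : T, probOf p (univ.filter fun ω => Y ω = s) * Real.logb 2 ((Fintype.card T : ℝ)⁻¹)
      = -(probOf p (univ.filter fun ω => Y ω = s) * Real.logb 2 (Fintype.card T)) := by
    intro s
    rw [Real.logb_inv]
    ring
  rw [Finset.sum_congr rfl (fun s _ => this s), Finset.sum_neg_distrib, neg_neg,
    ← Finset.sum_mul, sum_probOf p Y, hp1, one_mul]

/-! ### subEnt lemmas -/

lemma subEnt_mono (p : Ω → ℝ) (hp : ∀ ω, 0 ≤ p ω) (X : ∀ i, Ω → S i)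
    {γ δ : Finset (Fin n)} (hγδ : γ ⊆ δ) : subEnt p X γ ≤ subEnt p X δ := by
  have := shEnt_comp_le p hp (restrict X δ)
    (fun v (i : γ) => v ⟨i.1, hγδ i.2⟩)
  exact this

lemma subEnt_empty (p : Ω → ℝ) (hp1 : ∑ ω, p ω = 1) (X : ∀ i, Ω → S i) :
    subEnt p X (∅ : Finset (Fin n)) = 0 := by
  haveI hie : IsEmpty ((∅ : Finset (Fin n)) : Type _) :=
    ⟨fun i => Finset.notMem_empty i.1 i.2⟩
  unfold subEnt shEnt
  rw [Fintype.sum_unique]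
  have hfil : (univ.filter fun ω => restrict X ∅ ω = default) = univ := by
    apply Finset.filter_true_of_mem
    intro ω _
    exact Subsingleton.elim _ _
  rw [hfil]
  show -(probOf p univ * Real.logb 2 (probOf p univ)) = 0
  rw [show probOf p univ = 1 from hp1]
  simp

lemma subEnt_insert_le (p : Ω → ℝ) (hp : ∀ ω, 0 ≤ p ω) (hp1 : ∑ ω, p ω = 1)
    (X : ∀ i, Ω → S i) (k : Fin n) (γ : Finset (Fin n)) :
    subEnt p X (insert k γ) ≤ shEnt p (X k) + subEnt p X γ := by
  classical
  have heq : shEnt p (restrict X (insert k γ))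
      = shEnt p (fun ω => (X k ω, restrict X γ ω)) := by
    refine shEnt_eq_of_comp p hp (_root_.restrict X (insert k γ))
      (fun ω => (X k ω, _root_.restrict X γ ω))
      (fun v => (v ⟨k, Finset.mem_insert_self k γ⟩,
        fun i => v ⟨i.1, Finset.mem_insert_of_mem i.2⟩))
      (fun (q : S k × ∀ i : γ, S i.1) (i : (insert k γ : Finset (Fin n))) =>
        if h : (i : Fin n) = k then cast (congrArg S h.symm) q.1
        else q.2 ⟨i.1, (Finset.mem_insert.mp i.2).resolve_left h⟩)
      (fun ω => rfl) ?_
    intro ω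
    funext i
    rcases i with ⟨i, hi⟩
    dsimp only [_root_.restrict]
    by_cases h : i = k
    · rw [dif_pos h]
      subst h
      exact cast_eq _ _
    · rw [dif_neg h]
  calc subEnt p X (insert k γ) = shEnt p (fun ω => (X k ω, restrict X γ ω)) := heq
    _ ≤ shEnt p (X k) + shEnt p (restrict X γ) := shEnt_pair_le p hp hp1 _ _
    _ = shEnt p (X k) + subEnt p X γ := rfl

lemma subEnt_union_le (p : Ω → ℝ) (hp : ∀ ω, 0 ≤ p ω) (hp1 : ∑ ω, p ω = 1)
    (X : ∀ i, Ω → S i) (γ : Finset (Fin n)) (A : Finset (Fin n)) :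
    subEnt p X (γ ∪ A) ≤ subEnt p X γ + ∑ k ∈ A, shEnt p (X k) := by
  classical
  induction A using Finset.induction_on with
  | empty => simp
  | @insert k A hk ih =>
    rw [Finset.union_insert]
    calc subEnt p X (insert k (γ ∪ A))
        ≤ shEnt p (X k) + subEnt p X (γ ∪ A) := subEnt_insert_le p hp hp1 X k _
      _ ≤ shEnt p (X k) + (subEnt p X γ + ∑ j ∈ A, shEnt p (X j)) := by linarith
      _ = subEnt p X γ + ∑ j ∈ insert k A, shEnt p (X j) := by
          rw [Finset.sum_insert hk]; ring

lemma subEnt_le_of_subset (p : Ω → ℝ) (hp : ∀ ω, 0 ≤ p ω) (hp1 : ∑ ω, p ω = 1)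
    (X : ∀ i, Ω → S i) {γ δ : Finset (Fin n)} (h : γ ⊆ δ) :
    subEnt p X δ ≤ subEnt p X γ + ∑ k ∈ δ \ γ, shEnt p (X k) := by
  have := subEnt_union_le p hp hp1 X γ (δ \ γ)
  rwa [Finset.union_sdiff_of_subset h] at this

lemma subEnt_le_sum (p : Ω → ℝ) (hp : ∀ ω, 0 ≤ p ω) (hp1 : ∑ ω, p ω = 1)
    (X : ∀ i, Ω → S i) (δ : Finset (Fin n)) :
    subEnt p X δ ≤ ∑ k ∈ δ, shEnt p (X k) := by
  have := subEnt_union_le p hp hp1 X ∅ δ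
  rwa [Finset.empty_union, subEnt_empty p hp1 X, zero_add] at this

/-- if `Ω(X^n) ≤ 0`, then for every subset `γ` with `|γ| = m`
(`1 ≤ m ≤ n-1`) one has `C(X^γ) ≤ Ω(X^n) + (n-2)·log|𝒳|`, where `|𝒳|` is the
maximum alphabet cardinality (logarithm base 2). -/
theorem totCorr_upper_bound_of_oInfo_nonpos
    (p : Ω → ℝ) (hp : ∀ ω, 0 ≤ p ω) (hp1 : ∑ ω, p ω = 1)
    (X : ∀ i, Ω → S i) (m : ℕ) (hm1 : 1 ≤ m) (hm2 : m ≤ n - 1)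
    (hΩ : oInfo p X Finset.univ ≤ 0)
    (γ : Finset (Fin n)) (hγ : γ.card = m) :
    totCorr p X γ
      ≤ oInfo p X Finset.univ
        + ((n : ℝ) - 2) *
            Real.logb 2 ((Finset.univ.sup fun i => Fintype.card (S i) : ℕ) : ℝ) := by
  classical
  have hΩne : Nonempty Ω := by
    by_contra h
    rw [not_nonempty_iff] at h
    rw [Finset.univ_eq_empty, Finset.sum_empty] at hp1
    norm_num at hp1
  set L : ℝ := Real.logb 2 ((Finset.univ.sup fun i => Fintype.card (S i) : ℕ) : ℝ) with hLdef
  have hn2 : 2 ≤ n := by omega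
  -- every marginal entropy is at most L
  have hHL : ∀ k, shEnt p (X k) ≤ L := by
    intro k
    refine le_trans (shEnt_le_logb_card p hp hp1 (X k)) ?_
    have hk1 : 0 < Fintype.card (S k) :=
      Fintype.card_pos_iff.mpr ⟨X k (Classical.arbitrary Ω)⟩
    apply Real.logb_le_logb_of_le one_lt_two (by exact_mod_cast hk1)
    exact_mod_cast Finset.le_sup (f := fun i => Fintype.card (S i)) (Finset.mem_univ k)
  obtain ⟨i0, hi0⟩ := Finset.card_pos.mp (by rw [hγ]; omega : 0 < γ.card)
  have hcompl : 0 < (univ \ γ).card := by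
    rw [Finset.card_sdiff_of_subset (Finset.subset_univ γ), Finset.card_univ, Fintype.card_fin, hγ]
    omega
  obtain ⟨j0, hj0'⟩ := Finset.card_pos.mp hcompl
  have hj0 : j0 ∉ γ := (Finset.mem_sdiff.mp hj0').2
  have hij : i0 ≠ j0 := fun h => hj0 (h ▸ hi0)
  -- monotonicity
  have hmono : ∀ j : Fin n, subEnt p X (univ.erase j) ≤ subEnt p X univ :=
    fun j => subEnt_mono p hp X (Finset.subset_univ _)
  -- bound for the leave-one-out entropy at j0 ∉ γ
  have hF3 : subEnt p X (univ.erase j0) ≤ subEnt p X γ + ((n - m - 1 : ℕ) : ℝ) * L := by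
    have hsub : γ ⊆ univ.erase j0 := fun x hx =>
      Finset.mem_erase.mpr ⟨fun h => hj0 (h ▸ hx), Finset.mem_univ x⟩
    have h1 := subEnt_le_of_subset p hp hp1 X hsub
    have hcard : ((univ.erase j0) \ γ).card = n - m - 1 := by
      rw [Finset.card_sdiff_of_subset hsub, Finset.card_erase_of_mem (Finset.mem_univ _),
        Finset.card_univ, Fintype.card_fin, hγ]
      omega
    have h2 : ∑ k ∈ (univ.erase j0) \ γ, shEnt p (X k) ≤ ((n - m - 1 : ℕ) : ℝ) * L := by
      calc ∑ k ∈ (univ.erase j0) \ γ, shEnt p (X k)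
          ≤ ((univ.erase j0) \ γ).card • L :=
            Finset.sum_le_card_nsmul _ _ _ (fun k _ => hHL k)
        _ = ((n - m - 1 : ℕ) : ℝ) * L := by rw [hcard, nsmul_eq_mul]
    linarith
  -- bound for the leave-one-out entropy at i0 ∈ γ
  have hF4 : subEnt p X (univ.erase i0)
      ≤ (∑ k ∈ univ \ γ, shEnt p (X k)) + ((m - 1 : ℕ) : ℝ) * L := by
    have hsub : univ \ γ ⊆ univ.erase i0 := fun x hx =>
      Finset.mem_erase.mpr ⟨fun h => (Finset.mem_sdiff.mp hx).2 (h ▸ hi0), Finset.mem_univ _⟩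
    have h1 := subEnt_le_of_subset p hp hp1 X hsub
    have hset : (univ.erase i0) \ (univ \ γ) = γ.erase i0 := by
      ext x
      simp only [Finset.mem_sdiff, Finset.mem_erase, Finset.mem_univ, true_and, and_true,
        not_and, not_not]
    rw [hset] at h1
    have h2 : subEnt p X (univ \ γ) ≤ ∑ k ∈ univ \ γ, shEnt p (X k) :=
      subEnt_le_sum p hp hp1 X _
    have hcard : (γ.erase i0).card = m - 1 := by
      rw [Finset.card_erase_of_mem hi0, hγ]
    have h3 : ∑ k ∈ γ.erase i0, shEnt p (X k) ≤ ((m - 1 : ℕ) : ℝ) * L := by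
      calc ∑ k ∈ γ.erase i0, shEnt p (X k)
          ≤ (γ.erase i0).card • L := Finset.sum_le_card_nsmul _ _ _ (fun k _ => hHL k)
        _ = ((m - 1 : ℕ) : ℝ) * L := by rw [hcard, nsmul_eq_mul]
    linarith
  -- the key bound on the sum of leave-one-out entropies
  have hcastL : ((n - m - 1 : ℕ) : ℝ) + ((m - 1 : ℕ) : ℝ) = (n : ℝ) - 2 := by
    have h1 : (n - m - 1) + (m - 1) = n - 2 := by omega
    rw [← Nat.cast_add, h1, Nat.cast_sub hn2]
    norm_num
  have hkey : ∑ j : Fin n, subEnt p X (univ.erase j)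
      ≤ ((n : ℝ) - 2) * subEnt p X univ + subEnt p X γ
        + (∑ k ∈ univ \ γ, shEnt p (X k)) + ((n : ℝ) - 2) * L := by
    have hj0mem : j0 ∈ (univ : Finset (Fin n)).erase i0 :=
      Finset.mem_erase.mpr ⟨hij.symm, Finset.mem_univ _⟩
    have hsplit : ∑ j : Fin n, subEnt p X (univ.erase j)
        = subEnt p X (univ.erase i0) + (subEnt p X (univ.erase j0)
          + ∑ j ∈ ((univ : Finset (Fin n)).erase i0).erase j0, subEnt p X (univ.erase j)) := by
      rw [← Finset.add_sum_erase _ _ (Finset.mem_univ i0), ← Finset.add_sum_erase _ _ hj0mem]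
    have hcard2 : (((univ : Finset (Fin n)).erase i0).erase j0).card = n - 2 := by
      rw [Finset.card_erase_of_mem hj0mem, Finset.card_erase_of_mem (Finset.mem_univ _),
        Finset.card_univ, Fintype.card_fin]
      omega
    have hrest : ∑ j ∈ ((univ : Finset (Fin n)).erase i0).erase j0, subEnt p X (univ.erase j)
        ≤ ((n : ℝ) - 2) * subEnt p X univ := by
      calc ∑ j ∈ ((univ : Finset (Fin n)).erase i0).erase j0, subEnt p X (univ.erase j)
          ≤ (((univ : Finset (Fin n)).erase i0).erase j0).card • subEnt p X univ :=
            Finset.sum_le_card_nsmul _ _ _ (fun j _ => hmono j)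
        _ = ((n - 2 : ℕ) : ℝ) * subEnt p X univ := by rw [hcard2, nsmul_eq_mul]
        _ = ((n : ℝ) - 2) * subEnt p X univ := by
            rw [Nat.cast_sub hn2]; norm_num
    rw [hsplit]
    have hLmul : ((n - m - 1 : ℕ) : ℝ) * L + ((m - 1 : ℕ) : ℝ) * L = ((n : ℝ) - 2) * L := by
      rw [← add_mul, hcastL]
    linarith [hF3, hF4, hrest, hLmul]
  -- expand oInfo over univ
  have hoinfo : oInfo p X univ
      = (∑ j : Fin n, shEnt p (X j)) - 2 * subEnt p X univ
        + ((n : ℝ) * subEnt p X univ - ∑ j : Fin n, subEnt p X (univ.erase j)) := by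
    unfold oInfo totCorr bindEnt
    rw [Finset.sum_sub_distrib, Finset.sum_const, Finset.card_univ, Fintype.card_fin,
      nsmul_eq_mul]
    ring
  have hsum := Finset.sum_sdiff (f := fun k => shEnt p (X k)) (Finset.subset_univ γ)
  unfold totCorr
  rw [hoinfo]
  linarith [hkey, hsum]
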